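/- Fix 0 < ε < 1 and constants C, c, q > 0. Suppose {ψ_s}_{s∈ℤ^d} is a complete orthonormal system in ℓ²(ℤ^d) such that each ψ_s satisfies the semi-uniform localization bound |ψ_s(x)| ≤ C(1+|l|)^q e^{−c|x−l|} for every localization center l of ψ_s and every x. Then there exists L_ε, depending only on ε, C, c, q, d, such that for every L ≥ L_ε and every k ∈ [−L⁴, L⁴]^d ∩ ℤ^d, the number of indices s for which ψ_s has a localization center in the cube Λ_{k↗L} = (k₁, k₁+L] × ⋯ × (k_d, k_d+L] lies between (1−ε)^d L^d and (1+ε)^d L^d. -/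

import Mathlib

/-!
Let `S` be the set of states with a localization center in the cube `Λ`, and let `Λ⁺`, `Λ⁻` be
`Λ` enlarged and shrunk by `R`. The localization bound at its center `l ∈ Λ` leaves at most a
fraction `η ~ (1 + |l|)^{2q} e^{-cR}` of the mass of `ψ_s` outside `Λ⁺`, so column Parseval on
`Λ⁺` gives `#S (1 - η) ≤ |Λ⁺|`. Conversely, `|Λ⁻| = ∑_s ∑_{x ∈ Λ⁻} |ψ_s(x)|²`; states in `S`
contribute at most one each. A state centered at `l ∉ Λ` has small mass on `Λ⁻`: normalization
forces `|ψ_s(l)| ≥ 1 / W(l)` with `W(l) = C (1 + |l|)^q ∑_y e^{-c|y|}`, hence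
`|ψ_s(x)|² ≤ W(l)² |ψ_s(l)|² C² (1 + |l|)^{2q} e^{-2c|x-l|}`, and grouping the states by center,
`∑_s |ψ_s(l)|² = 1` pays for all states sharing `l`. With `R = ⌊εL/4⌋` both errors are a power of
`L` times `e^{-c'εL}`, eventually below the gap between `(1 ± ε/2)^d` and `(1 ± ε)^d`.
-/

def supNormZ {d : ℕ} (n : Fin d → ℤ) : ℝ := ((Finset.univ.sup fun k => (n k).natAbs : ℕ) : ℝ)

open Finset Filter Topology Real
open scoped ENNReal

lemma supNormZ_eq_norm {d : ℕ} (n : Fin d → ℤ) : supNormZ n = ‖n‖ := by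
  rw [supNormZ, Pi.norm_def, ← NNReal.coe_natCast, Nat.cast_finsetSup]
  simp [NNReal.natCast_natAbs]

lemma summable_exp_neg_mul_norm_int {a : ℝ} (ha : 0 < a) :
    Summable fun n : ℤ => exp (-a * ‖n‖) := by
  have hnat : Summable fun n : ℕ => exp (-a * ‖(n : ℤ)‖) := by
    refine (summable_geometric_of_lt_one (exp_nonneg _)
      (exp_lt_one_iff.mpr (neg_lt_zero.mpr ha))).congr fun n => ?_
    rw [← exp_nat_mul, Int.norm_natCast]
    ring_nf
  exact .of_nat_of_neg hnat (by simpa using hnat)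

lemma summable_exp_neg_mul_norm {a : ℝ} (ha : 0 < a) :
    ∀ d : ℕ, Summable fun x : Fin d → ℤ => exp (-a * ‖x‖)
  | 0 => .of_finite
  | d + 1 => by
    have hprod : Summable fun p : ℤ × (Fin d → ℤ) =>
        exp (-(a / 2) * ‖p.1‖) * exp (-(a / 2) * ‖p.2‖) :=
      (summable_exp_neg_mul_norm_int (half_pos ha)).mul_of_nonneg
        (summable_exp_neg_mul_norm (half_pos ha) d) (fun _ => (exp_pos _).le)
        (fun _ => (exp_pos _).le)
    have hcons : Summable fun x : Fin (d + 1) → ℤ =>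
        exp (-(a / 2) * ‖x 0‖) * exp (-(a / 2) * ‖Fin.tail x‖) :=
      ((Fin.consEquiv fun _ => ℤ).summable_iff).mp hprod
    refine hcons.of_nonneg_of_le (fun _ => (exp_pos _).le) fun x => ?_
    rw [← exp_add]
    gcongr
    have h0 : ‖x 0‖ ≤ ‖x‖ := norm_le_pi_norm x 0
    have htail : ‖Fin.tail x‖ ≤ ‖x‖ := pi_norm_le_iff_of_nonneg (norm_nonneg x) |>.mpr
      fun i => norm_le_pi_norm x i.succ
    nlinarith

lemma one_add_rpow_le_mul_exp {p b t : ℝ} (hp : 0 ≤ p) (hb : 0 < b) (ht : 0 ≤ t) :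
    (1 + t) ^ p ≤ ((p + b) / b) ^ p * exp (b * t) := by
  set r := b / (p + b) with hr
  have hr0 : 0 < r := by positivity
  have hr1 : r ≤ 1 := (div_le_one (by positivity)).mpr (by linarith)
  have hrp : r * p ≤ b := by
    rw [hr, div_mul_eq_mul_div, div_le_iff₀ (by positivity)]; nlinarith
  have hbase : 1 + t ≤ r⁻¹ * exp (r * t) := by
    rw [le_inv_mul_iff₀ hr0]
    nlinarith [add_one_le_exp (r * t)]
  calc (1 + t) ^ p ≤ (r⁻¹ * exp (r * t)) ^ p := by gcongr
    _ = ((p + b) / b) ^ p * exp (r * p * t) := by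
      rw [mul_rpow (by positivity) (exp_pos _).le, ← exp_mul, hr, inv_div]; ring_nf
    _ ≤ ((p + b) / b) ^ p * exp (b * t) := by gcongr

lemma tendsto_one_add_rpow_mul_exp_neg_floor {p a ε : ℝ} (hp : 0 ≤ p) (ha : 0 < a) (hε : 0 < ε) :
    Tendsto (fun L : ℕ => (1 + ((L : ℝ) ^ 4 + L)) ^ p * exp (-a * ⌊ε * L / 4⌋₊)) atTop (𝓝 0) := by
  set b := a * ε / 8 with hbdef
  have hb : 0 < b := by positivity
  have hbound : ∀ L : ℕ, (1 + ((L : ℝ) ^ 4 + L)) ^ p * exp (-a * ⌊ε * L / 4⌋₊) ≤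
      ((4 * p + b) / b) ^ (4 * p) * exp a * exp (-(b * L)) := by
    intro L
    have hL : (0 : ℝ) ≤ L := L.cast_nonneg
    have hpoly : (1 + ((L : ℝ) ^ 4 + L)) ^ p ≤ ((4 * p + b) / b) ^ (4 * p) * exp (b * L) :=
      calc (1 + ((L : ℝ) ^ 4 + L)) ^ p ≤ ((1 + (L : ℝ)) ^ (4 : ℕ)) ^ p := by
            gcongr; nlinarith [pow_nonneg hL 2, pow_nonneg hL 3]
        _ = (1 + (L : ℝ)) ^ (4 * p) := by rw [← rpow_natCast, ← rpow_mul (by positivity)]; norm_num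
        _ ≤ _ := one_add_rpow_le_mul_exp (by positivity) hb hL
    have hfloor : ε * L / 4 - 1 < ⌊ε * L / 4⌋₊ := Nat.sub_one_lt_floor _
    calc (1 + ((L : ℝ) ^ 4 + L)) ^ p * exp (-a * ⌊ε * L / 4⌋₊)
        ≤ ((4 * p + b) / b) ^ (4 * p) * exp (b * L) * exp (a - 2 * b * L) := by
          gcongr; nlinarith [mul_lt_mul_of_pos_left hfloor ha]
      _ = ((4 * p + b) / b) ^ (4 * p) * exp a * exp (-(b * L)) := by
          simp only [mul_assoc, ← exp_add]; ring_nf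
  have hlim : Tendsto (fun L : ℕ => ((4 * p + b) / b) ^ (4 * p) * exp a * exp (-(b * L))) atTop
      (𝓝 0) := by
    simpa using (tendsto_exp_neg_atTop_nhds_zero.comp
      (tendsto_natCast_atTop_atTop.const_mul_atTop hb)).const_mul
        (((4 * p + b) / b) ^ (4 * p) * exp a)
  exact squeeze_zero (fun L => by positivity) hbound hlim

noncomputable def cube {d : ℕ} (k : Fin d → ℤ) (a b : ℤ) : Finset (Fin d → ℤ) :=
  Fintype.piFinset fun i => Ioc (k i + a) (k i + b)

section Cube
variable {d : ℕ} {k x y : Fin d → ℤ} {a b : ℤ}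

lemma mem_cube : x ∈ cube k a b ↔ ∀ i, k i + a < x i ∧ x i ≤ k i + b := by
  simp [cube]

lemma card_cube (k : Fin d → ℤ) (a b : ℤ) : #(cube k a b) = (b - a).toNat ^ d := by
  simp [cube, Fintype.card_piFinset, Int.card_Ioc]

lemma le_norm_sub_of_mem_cube_of_notMem (R : ℤ) (hx : x ∈ cube k (a + R) (b - R))
    (hy : y ∉ cube k a b) : (R : ℝ) ≤ ‖x - y‖ := by
  rw [mem_cube] at hx hy
  push Not at hy
  obtain ⟨i, hi⟩ := hy
  have hRi : R ≤ |x i - y i| := by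
    have := hx i
    by_cases h : k i + a < y i
    · have := hi h; rw [abs_sub_comm]; exact le_abs.mpr (Or.inl (by omega))
    · exact le_abs.mpr (Or.inl (by omega))
  calc (R : ℝ) ≤ ‖(x - y) i‖ := by simpa [Int.norm_eq_abs] using (Int.cast_le (R := ℝ)).mpr hRi
    _ ≤ ‖x - y‖ := norm_le_pi_norm _ i

lemma norm_le_of_mem_cube (ha : 0 ≤ a) (hb : 0 ≤ b) (hx : x ∈ cube k a b) :
    ‖x‖ ≤ ‖k‖ + b := by
  refine pi_norm_le_iff_of_nonneg (by positivity) |>.mpr fun i => ?_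
  obtain ⟨hlo, hhi⟩ := mem_cube.mp hx i
  have hxi : |x i| ≤ |k i| + b :=
    abs_le.mpr ⟨by linarith [neg_abs_le (k i)], by linarith [le_abs_self (k i)]⟩
  have hki : ‖k i‖ ≤ ‖k‖ := norm_le_pi_norm k i
  rw [Int.norm_eq_abs] at hki ⊢
  have : |(x i : ℝ)| ≤ |(k i : ℝ)| + b := by exact_mod_cast hxi
  linarith
end Cube

def IsLocalizationCenter {X : Type*} (f : X → ℝ) (l : X) : Prop := ∀ x, |f x| ≤ |f l|

lemma one_le_abs_mul_tsum_of_isLocalizationCenter {X : Type*} {f g : X → ℝ} {l : X}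
    (hf : ∑' x, f x ^ 2 = 1) (hl : IsLocalizationCenter f l) (hfg : ∀ x, |f x| ≤ g x)
    (hg : Summable g) : 1 ≤ |f l| * ∑' x, g x := by
  have hsq : ∀ x, f x ^ 2 ≤ |f l| * g x := fun x => by
    rw [← sq_abs, sq]
    exact mul_le_mul (hl x) (hfg x) (abs_nonneg _) (abs_nonneg _)
  rw [← hf, ← tsum_mul_left]
  exact ((hg.mul_left _).of_nonneg_of_le (fun _ => sq_nonneg _) hsq).tsum_le_tsum hsq
    (hg.mul_left _)

lemma ENNReal.tsum_ofReal_eq_one {X : Type*} {f : X → ℝ} (hf0 : ∀ x, 0 ≤ f x)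
    (hf : ∑' x, f x = 1) : ∑' x, ENNReal.ofReal (f x) = 1 := by
  have hs : Summable f := by
    by_contra h
    simp [tsum_eq_zero_of_not_summable h] at hf
  rw [← ENNReal.ofReal_tsum_of_nonneg hf0 hs, hf, ENNReal.ofReal_one]

-- `p s x` stands for `|ψ_s(x)|²`; in `ℝ≥0∞` every series converges and may be rearranged.
section Counting
variable {ι X : Type*} {p : ι → X → ℝ≥0∞}

lemma encard_mul_le_card_of_le_sum (hcol : ∀ x, ∑' s, p s x ≤ 1) {S : Set ι} {Λ : Finset X}
    {m : ℝ≥0∞} (hS : ∀ s ∈ S, m ≤ ∑ x ∈ Λ, p s x) : S.encard * m ≤ #Λ :=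
  calc S.encard * m = ∑' s : S, m := (ENNReal.tsum_set_const S m).symm
    _ ≤ ∑' s : S, ∑ x ∈ Λ, p s x := ENNReal.tsum_le_tsum fun s => hS s s.2
    _ ≤ ∑' s, ∑ x ∈ Λ, p s x := ENNReal.tsum_comp_le_tsum_of_injective Subtype.val_injective _
    _ = ∑ x ∈ Λ, ∑' s, p s x := Summable.tsum_finsetSum fun _ _ => ENNReal.summable
    _ ≤ ∑ _x ∈ Λ, 1 := sum_le_sum fun x _ => hcol x
    _ = #Λ := by simp

lemma card_le_encard_add_tsum_compl (hrow : ∀ s, ∑' x, p s x ≤ 1) (hcol : ∀ x, ∑' s, p s x = 1)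
    (S : Set ι) (Λ : Finset X) : (#Λ : ℝ≥0∞) ≤ S.encard + ∑' s : ↥Sᶜ, ∑ x ∈ Λ, p s x :=
  calc (#Λ : ℝ≥0∞) = ∑' s, ∑ x ∈ Λ, p s x := by
        rw [Summable.tsum_finsetSum fun _ _ => ENNReal.summable]
        simp [hcol]
    _ = ∑' s : S, ∑ x ∈ Λ, p s x + ∑' s : ↥Sᶜ, ∑ x ∈ Λ, p s x :=
      (ENNReal.summable.tsum_add_tsum_compl ENNReal.summable).symm
    _ ≤ ∑' s : S, 1 + ∑' s : ↥Sᶜ, ∑ x ∈ Λ, p s x := by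
      gcongr with s
      exact (ENNReal.sum_le_tsum Λ).trans (hrow s)
    _ = S.encard + ∑' s : ↥Sᶜ, ∑ x ∈ Λ, p s x := by rw [ENNReal.tsum_set_const, mul_one]

lemma tsum_le_tsum_of_le_mul_apply (hcol : ∀ x, ∑' s, p s x ≤ 1) (center : ι → X)
    {F : ι → ℝ≥0∞} {G : X → ℝ≥0∞} (hF : ∀ s, F s ≤ G (center s) * p s (center s)) :
    ∑' s, F s ≤ ∑' l, G l :=
  calc ∑' s, F s ≤ ∑' s, G (center s) * p s (center s) := ENNReal.tsum_le_tsum hF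
    _ = ∑' l, ∑' s : center ⁻¹' {l}, G (center s) * p s (center s) :=
      (ENNReal.tsum_fiberwise _ center).symm
    _ = ∑' l, G l * ∑' s : center ⁻¹' {l}, p s l := by
      congr 1 with l
      rw [← ENNReal.tsum_mul_left]
      exact tsum_congr fun s => by rw [s.2]
    _ ≤ ∑' l, G l * 1 := by
      gcongr with l
      exact (ENNReal.tsum_comp_le_tsum_of_injective Subtype.val_injective _).trans (hcol l)
    _ = ∑' l, G l := by simp
end Counting

noncomputable def expSum (d : ℕ) (c : ℝ) : ℝ := ∑' x : Fin d → ℤ, exp (-c * ‖x‖)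

noncomputable def leakageBound (d : ℕ) (C c q B R : ℝ) : ℝ :=
  (C * (1 + B) ^ q) ^ 2 * exp (-c * R) * expSum d c

/-- The factor `((4 * q + c / 2) / (c / 2)) ^ (4 * q)` is the constant of `one_add_rpow_le_mul_exp`
that trades `(1 + t) ^ (4 * q)` for `exp (c / 2 * t)`. -/
noncomputable def intrusionBound (d : ℕ) (C c q B R : ℝ) : ℝ :=
  expSum d c ^ 3 * C ^ 4 * ((4 * q + c / 2) / (c / 2)) ^ (4 * q) * (1 + B) ^ (4 * q) *
    exp (-(c / 2) * R)

lemma expSum_nonneg (d : ℕ) (c : ℝ) : 0 ≤ expSum d c := tsum_nonneg fun _ => (exp_pos _).le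

section Decay
variable {d : ℕ} {c : ℝ}

lemma summable_exp_neg_mul_norm_sub (hc : 0 < c) (l : Fin d → ℤ) :
    Summable fun x : Fin d → ℤ => exp (-c * ‖x - l‖) :=
  (summable_exp_neg_mul_norm hc d).comp_injective (Equiv.subRight l).injective

lemma tsum_exp_neg_mul_norm_sub (l : Fin d → ℤ) :
    ∑' x : Fin d → ℤ, exp (-c * ‖x - l‖) = expSum d c :=
  (Equiv.subRight l).tsum_eq fun y => exp (-c * ‖y‖)

lemma tsum_ofReal_exp_neg_mul_norm_sub (hc : 0 < c) (l : Fin d → ℤ) :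
    ∑' x : Fin d → ℤ, ENNReal.ofReal (exp (-c * ‖x - l‖)) = ENNReal.ofReal (expSum d c) := by
  rw [← ENNReal.ofReal_tsum_of_nonneg (fun _ => (exp_pos _).le)
    (summable_exp_neg_mul_norm_sub hc l), tsum_exp_neg_mul_norm_sub]

lemma tsum_ofReal_sq_le_of_decay (hc : 0 < c) {f : (Fin d → ℤ) → ℝ} {l : Fin d → ℤ} {A R : ℝ}
    (hf : ∀ x, |f x| ≤ A * exp (-c * ‖x - l‖)) {T : Set (Fin d → ℤ)}
    (hT : ∀ x ∈ T, R ≤ ‖x - l‖) :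
    ∑' x : T, ENNReal.ofReal (f x ^ 2) ≤ ENNReal.ofReal (A ^ 2 * exp (-c * R) * expSum d c) := by
  have hpt : ∀ x : T, f x ^ 2 ≤ A ^ 2 * exp (-c * R) * exp (-c * ‖(x : Fin d → ℤ) - l‖) := by
    intro x
    have hx := hT x x.2
    calc f x ^ 2 ≤ (A * exp (-c * ‖(x : Fin d → ℤ) - l‖)) ^ 2 := by
          rw [← sq_abs]; exact pow_le_pow_left₀ (abs_nonneg _) (hf x) 2
      _ = A ^ 2 * exp (-c * ‖(x : Fin d → ℤ) - l‖) * exp (-c * ‖(x : Fin d → ℤ) - l‖) := by ring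
      _ ≤ A ^ 2 * exp (-c * R) * exp (-c * ‖(x : Fin d → ℤ) - l‖) := by
          gcongr A ^ 2 * ?_ * _; exact exp_le_exp.mpr (by nlinarith)
  calc ∑' x : T, ENNReal.ofReal (f x ^ 2)
      ≤ ∑' x : T, ENNReal.ofReal (A ^ 2 * exp (-c * R)) *
          ENNReal.ofReal (exp (-c * ‖(x : Fin d → ℤ) - l‖)) :=
        ENNReal.tsum_le_tsum fun x => by
          rw [← ENNReal.ofReal_mul (by positivity)]; exact ENNReal.ofReal_le_ofReal (hpt x)
    _ ≤ ∑' x, ENNReal.ofReal (A ^ 2 * exp (-c * R)) * ENNReal.ofReal (exp (-c * ‖x - l‖)) :=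
        ENNReal.tsum_comp_le_tsum_of_injective Subtype.val_injective _
    _ = ENNReal.ofReal (A ^ 2 * exp (-c * R) * expSum d c) := by
        rw [ENNReal.tsum_mul_left, tsum_ofReal_exp_neg_mul_norm_sub hc,
          ← ENNReal.ofReal_mul (by positivity)]

lemma weight_mul_decay_sq_le (hc : 0 < c) {C q B R u t : ℝ} (hq : 0 ≤ q) (hB : 0 ≤ B)
    (hu0 : 0 ≤ u) (ht : 0 ≤ t) (hu : u ≤ B + t) (hR : R ≤ t) :
    (C * (1 + u) ^ q) ^ 4 * exp (-c * t) ^ 2 ≤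
      C ^ 4 * ((4 * q + c / 2) / (c / 2)) ^ (4 * q) * (1 + B) ^ (4 * q) * exp (-(c / 2) * R) *
        exp (-c * t) := by
  have hpow : (C * (1 + u) ^ q) ^ 4 = C ^ 4 * (1 + u) ^ (4 * q) := by
    rw [mul_pow, ← rpow_mul_natCast (by linarith), mul_comm q]; norm_num
  have hsplit : (1 + u) ^ (4 * q) ≤ (1 + B) ^ (4 * q) * (1 + t) ^ (4 * q) := by
    rw [← mul_rpow (by linarith) (by linarith)]
    exact rpow_le_rpow (by linarith) (by nlinarith) (by positivity)
  have hpoly := one_add_rpow_le_mul_exp (p := 4 * q) (b := c / 2) (by positivity) (by positivity) ht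
  have hexp : exp (c / 2 * t) * exp (-c * t) ^ 2 ≤ exp (-(c / 2) * R) * exp (-c * t) := by
    rw [sq, ← exp_add, ← exp_add, ← exp_add]; exact exp_le_exp.mpr (by nlinarith)
  rw [hpow]
  calc C ^ 4 * (1 + u) ^ (4 * q) * exp (-c * t) ^ 2
      ≤ C ^ 4 * ((1 + B) ^ (4 * q) * (((4 * q + c / 2) / (c / 2)) ^ (4 * q) * exp (c / 2 * t))) *
          exp (-c * t) ^ 2 := by gcongr; exact hsplit.trans (by gcongr)
    _ = C ^ 4 * ((4 * q + c / 2) / (c / 2)) ^ (4 * q) * (1 + B) ^ (4 * q) *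
          (exp (c / 2 * t) * exp (-c * t) ^ 2) := by ring
    _ ≤ _ := by rw [mul_assoc _ (exp _) (exp _)]; gcongr

lemma ofReal_one_sub_le_sum_of_decay (hc : 0 < c) {f : (Fin d → ℤ) → ℝ} {l : Fin d → ℤ}
    {A R : ℝ} (hf1 : ∑' x, f x ^ 2 = 1) (hf : ∀ x, |f x| ≤ A * exp (-c * ‖x - l‖))
    {Λ : Finset (Fin d → ℤ)} (hΛ : ∀ x ∉ Λ, R ≤ ‖x - l‖) :
    ENNReal.ofReal (1 - A ^ 2 * exp (-c * R) * expSum d c) ≤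
      ∑ x ∈ Λ, ENNReal.ofReal (f x ^ 2) := by
  have htail := tsum_ofReal_sq_le_of_decay hc hf (T := (Λ : Set (Fin d → ℤ))ᶜ)
    fun x hx => hΛ x hx
  have hsplit := ENNReal.sum_add_tsum_compl Λ fun x => ENNReal.ofReal (f x ^ 2)
  rw [ENNReal.tsum_ofReal_eq_one (fun _ => sq_nonneg _) hf1] at hsplit
  rw [ENNReal.ofReal_sub _ (by have := expSum_nonneg d c; positivity), ENNReal.ofReal_one, ← hsplit]
  exact tsub_le_iff_right.mpr (by gcongr)

lemma tsum_ofReal_weight_mul_decay_sq_le (hc : 0 < c) {C q B R : ℝ} (hq : 0 ≤ q) (hB : 0 ≤ B)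
    {x : Fin d → ℤ} (hx : ‖x‖ ≤ B) {T : Set (Fin d → ℤ)} (hT : ∀ l ∈ T, R ≤ ‖x - l‖) :
    ∑' l : T, ENNReal.ofReal ((C * (1 + ‖(l : Fin d → ℤ)‖) ^ q * expSum d c) ^ 2 *
        (C * (1 + ‖(l : Fin d → ℤ)‖) ^ q * exp (-c * ‖x - l‖)) ^ 2) ≤
      ENNReal.ofReal (intrusionBound d C c q B R) := by
  set K := expSum d c with hK
  set D := C ^ 4 * ((4 * q + c / 2) / (c / 2)) ^ (4 * q) * (1 + B) ^ (4 * q) * exp (-(c / 2) * R)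
    with hD
  have hpt : ∀ l : T, (C * (1 + ‖(l : Fin d → ℤ)‖) ^ q * K) ^ 2 *
      (C * (1 + ‖(l : Fin d → ℤ)‖) ^ q * exp (-c * ‖x - l‖)) ^ 2 ≤
      K ^ 2 * D * exp (-c * ‖x - l‖) := by
    intro l
    have hlx : ‖(l : Fin d → ℤ)‖ ≤ B + ‖x - l‖ := by
      have := norm_sub_norm_le (l : Fin d → ℤ) x
      rw [norm_sub_rev] at this; linarith
    have := weight_mul_decay_sq_le hc (C := C) hq hB (norm_nonneg _) (norm_nonneg _) hlx (hT l l.2)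
    calc _ = K ^ 2 * ((C * (1 + ‖(l : Fin d → ℤ)‖) ^ q) ^ 4 * exp (-c * ‖x - l‖) ^ 2) := by ring
      _ ≤ K ^ 2 * D * exp (-c * ‖x - l‖) := by rw [mul_assoc]; gcongr
  have hKD : 0 ≤ K ^ 2 * D := by positivity
  calc _ ≤ ∑' l : T, ENNReal.ofReal (K ^ 2 * D) *
          ENNReal.ofReal (exp (-c * ‖x - l‖)) :=
        ENNReal.tsum_le_tsum fun l => by
          rw [← ENNReal.ofReal_mul hKD]; exact ENNReal.ofReal_le_ofReal (hpt l)
    _ ≤ ∑' l, ENNReal.ofReal (K ^ 2 * D) * ENNReal.ofReal (exp (-c * ‖x - l‖)) :=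
        ENNReal.tsum_comp_le_tsum_of_injective Subtype.val_injective _
    _ = _ := by
        simp_rw [norm_sub_rev x]
        rw [ENNReal.tsum_mul_left, tsum_ofReal_exp_neg_mul_norm_sub hc, ← ENNReal.ofReal_mul hKD,
          intrusionBound, ← hK, hD]
        congr 1; ring

lemma one_le_ofReal_mul_of_isLocalizationCenter (hc : 0 < c) {f : (Fin d → ℤ) → ℝ}
    {l : Fin d → ℤ} {A : ℝ} (hf1 : ∑' x, f x ^ 2 = 1) (hl : IsLocalizationCenter f l)
    (hf : ∀ x, |f x| ≤ A * exp (-c * ‖x - l‖)) :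
    1 ≤ ENNReal.ofReal ((A * expSum d c) ^ 2) * ENNReal.ofReal (f l ^ 2) := by
  have h := one_le_abs_mul_tsum_of_isLocalizationCenter hf1 hl hf
    ((summable_exp_neg_mul_norm_sub hc l).mul_left A)
  rw [tsum_mul_left, tsum_exp_neg_mul_norm_sub] at h
  rw [← ENNReal.ofReal_mul (sq_nonneg _), ← ENNReal.ofReal_one]
  refine ENNReal.ofReal_le_ofReal ?_
  rw [← sq_abs (f l), ← mul_pow, mul_comm]
  nlinarith
end Decay

lemma one_sub_div_pow_pos {a b : ℝ} {d : ℕ} (ha : 0 ≤ a) (hab : a < b) (hd : d ≠ 0) :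
    0 < 1 - (a / b) ^ d := by
  have := pow_lt_one₀ (div_nonneg ha (ha.trans hab.le)) ((div_lt_one (ha.trans_lt hab)).mpr hab) hd
  linarith

lemma le_pow_mul_of_mul_one_sub_le {N X L a b η : ℝ} {d : ℕ} (ha : 0 < a) (hb : 0 < b)
    (hN : 0 ≤ N) (hX : 0 ≤ X) (hXL : X ≤ a * L) (hη : η ≤ 1 - (a / b) ^ d)
    (h : N * (1 - η) ≤ X ^ d) : N ≤ b ^ d * L ^ d := by
  have h1 : N * (a / b) ^ d ≤ (a * L) ^ d :=
    calc N * (a / b) ^ d ≤ N * (1 - η) := by gcongr; linarith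
      _ ≤ X ^ d := h
      _ ≤ (a * L) ^ d := by gcongr
  rw [div_pow, mul_pow, ← mul_div_assoc, div_le_iff₀ (by positivity)] at h1
  nlinarith [pow_pos ha d, pow_pos hb d]

lemma pow_mul_le_of_le_mul_one_sub {N X L a b δ : ℝ} {d : ℕ} (ha : 0 < a) (hb : 0 ≤ b)
    (hL : 0 ≤ L) (hXL : a * L ≤ X) (hδ : δ ≤ 1 - (b / a) ^ d)
    (h : X ^ d * (1 - δ) ≤ N) : b ^ d * L ^ d ≤ N :=
  have hX : 0 ≤ X := (mul_nonneg ha.le hL).trans hXL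
  calc b ^ d * L ^ d = (a * L) ^ d * (b / a) ^ d := by
        rw [div_pow, mul_pow]; field_simp
    _ ≤ X ^ d * (1 - δ) := by gcongr; linarith
    _ ≤ N := h

lemma ncard_mul_le_and_le_ncard {ι : Type*} {S : Set ι} {N₁ N₂ : ℕ} {η δ : ℝ} (hη : η < 1)
    (hδ : 0 ≤ δ) (hU : S.encard * ENNReal.ofReal (1 - η) ≤ N₁)
    (hL : (N₂ : ℝ≥0∞) ≤ S.encard + N₂ * ENNReal.ofReal δ) :
    S.ncard * (1 - η) ≤ N₁ ∧ N₂ * (1 - δ) ≤ S.ncard := by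
  have hfin : S.Finite := by
    refine Set.encard_ne_top_iff.mp fun h => ?_
    rw [h] at hU
    simp [ENNReal.top_mul (ENNReal.ofReal_pos.mpr (sub_pos.mpr hη)).ne'] at hU
  rw [← hfin.cast_ncard_eq, ENat.toENNReal_coe] at hU hL
  rw [← ENNReal.ofReal_natCast, ← ENNReal.ofReal_mul (by positivity), ← ENNReal.ofReal_natCast,
    ENNReal.ofReal_le_ofReal_iff (by positivity)] at hU
  simp only [← ENNReal.ofReal_natCast] at hL
  rw [← ENNReal.ofReal_mul (by positivity), ← ENNReal.ofReal_add (by positivity) (by positivity),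
    ENNReal.ofReal_le_ofReal_iff (by positivity)] at hL
  exact ⟨hU, by linarith⟩

lemma eventually_leakageBound_le_and_intrusionBound_le {d : ℕ} {C c q ε η δ : ℝ} (hc : 0 < c)
    (hq : 0 ≤ q) (hε : 0 < ε) (hη : 0 < η) (hδ : 0 < δ) :
    ∀ᶠ L : ℕ in atTop,
      leakageBound d C c q ((L : ℝ) ^ 4 + L) ⌊ε * L / 4⌋₊ ≤ η ∧
      intrusionBound d C c q ((L : ℝ) ^ 4 + L) ⌊ε * L / 4⌋₊ ≤ δ := by
  have h1 := (tendsto_one_add_rpow_mul_exp_neg_floor (by positivity) hc hε (p := 2 * q)).const_mul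
    (C ^ 2 * expSum d c)
  have h2 := (tendsto_one_add_rpow_mul_exp_neg_floor (by positivity) (half_pos hc) hε
    (p := 4 * q)).const_mul (expSum d c ^ 3 * C ^ 4 * ((4 * q + c / 2) / (c / 2)) ^ (4 * q))
  rw [mul_zero] at h1 h2
  filter_upwards [h1.eventually (ge_mem_nhds hη), h2.eventually (ge_mem_nhds hδ)] with L hL1 hL2
  constructor
  · refine Eq.trans_le ?_ hL1
    rw [leakageBound, mul_pow, ← rpow_mul_natCast (by positivity), mul_comm q]; push_cast; ring
  · exact Eq.trans_le (by rw [intrusionBound]; ring) hL2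

def IsSemiUniformlyLocalized {ι : Type*} {d : ℕ} (ψ : ι → (Fin d → ℤ) → ℝ) (C c q : ℝ) : Prop :=
  ∀ s l, IsLocalizationCenter (ψ s) l → ∀ x, |ψ s x| ≤ C * (1 + ‖l‖) ^ q * exp (-c * ‖x - l‖)

def statesCenteredIn {ι X : Type*} (ψ : ι → X → ℝ) (Λ : Set X) : Set ι :=
  {s | ∃ l, IsLocalizationCenter (ψ s) l ∧ l ∈ Λ}

section Family
variable {ι : Type*} {d : ℕ} {ψ : ι → (Fin d → ℤ) → ℝ} {C c q : ℝ}

lemma tsum_compl_statesCenteredIn_sum_le (hc : 0 < c) (hq : 0 ≤ q) {B R : ℝ} (hB : 0 ≤ B)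
    (hrow : ∀ s, ∑' x, ψ s x ^ 2 = 1) (hcol : ∀ x, ∑' s, ψ s x ^ 2 = 1)
    (hcen : ∀ s, ∃ l, IsLocalizationCenter (ψ s) l)
    (hloc : IsSemiUniformlyLocalized ψ C c q)
    {Λ : Set (Fin d → ℤ)} {Λ'' : Finset (Fin d → ℤ)} (hB'' : ∀ x ∈ Λ'', ‖x‖ ≤ B)
    (hsep : ∀ x ∈ Λ'', ∀ l ∉ Λ, R ≤ ‖x - l‖) :
    ∑' s : ↥(statesCenteredIn ψ Λ)ᶜ, ∑ x ∈ Λ'', ENNReal.ofReal (ψ s x ^ 2) ≤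
      #Λ'' * ENNReal.ofReal (intrusionBound d C c q B R) := by
  choose center hcenter using hcen
  set K := expSum d c
  set g : (Fin d → ℤ) → (Fin d → ℤ) → ℝ≥0∞ := fun l x =>
    ENNReal.ofReal ((C * (1 + ‖l‖) ^ q * K) ^ 2 * (C * (1 + ‖l‖) ^ q * exp (-c * ‖x - l‖)) ^ 2)
  have hcol' : ∀ x, ∑' s, ENNReal.ofReal (ψ s x ^ 2) ≤ 1 := fun x =>
    (ENNReal.tsum_ofReal_eq_one (fun _ => sq_nonneg _) (hcol x)).le
  have hF : ∀ s,
      (statesCenteredIn ψ Λ)ᶜ.indicator (fun s => ∑ x ∈ Λ'', ENNReal.ofReal (ψ s x ^ 2)) s ≤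
        Λᶜ.indicator (fun l => ∑ x ∈ Λ'', g l x) (center s) *
          ENNReal.ofReal (ψ s (center s) ^ 2) := by
    intro s
    by_cases hs : s ∈ statesCenteredIn ψ Λ
    · simp [hs]
    have hout : center s ∉ Λ := fun h => hs ⟨center s, hcenter s, h⟩
    rw [Set.indicator_of_mem hs, Set.indicator_of_mem hout, Finset.sum_mul]
    gcongr with x
    have hw := one_le_ofReal_mul_of_isLocalizationCenter hc (hrow s) (hcenter s)
      (hloc s _ (hcenter s))
    calc ENNReal.ofReal (ψ s x ^ 2)
        ≤ ENNReal.ofReal ((C * (1 + ‖center s‖) ^ q * exp (-c * ‖x - center s‖)) ^ 2) :=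
          ENNReal.ofReal_le_ofReal (by
            rw [← sq_abs]; exact pow_le_pow_left₀ (abs_nonneg _) (hloc s _ (hcenter s) x) 2)
      _ ≤ ENNReal.ofReal ((C * (1 + ‖center s‖) ^ q * exp (-c * ‖x - center s‖)) ^ 2) *
          (ENNReal.ofReal ((C * (1 + ‖center s‖) ^ q * K) ^ 2) *
            ENNReal.ofReal (ψ s (center s) ^ 2)) := le_mul_of_one_le_right' hw
      _ = g (center s) x * ENNReal.ofReal (ψ s (center s) ^ 2) := by
          rw [← mul_assoc, ← ENNReal.ofReal_mul (sq_nonneg _), mul_comm (_ ^ 2)]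
  calc ∑' s : ↥(statesCenteredIn ψ Λ)ᶜ, ∑ x ∈ Λ'', ENNReal.ofReal (ψ s x ^ 2)
      = ∑' s, (statesCenteredIn ψ Λ)ᶜ.indicator
          (fun s => ∑ x ∈ Λ'', ENNReal.ofReal (ψ s x ^ 2)) s :=
          _root_.tsum_subtype (statesCenteredIn ψ Λ)ᶜ fun s => ∑ x ∈ Λ'', ENNReal.ofReal (ψ s x ^ 2)
    _ ≤ ∑' l, Λᶜ.indicator (fun l => ∑ x ∈ Λ'', g l x) l :=
        tsum_le_tsum_of_le_mul_apply hcol' center hF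
    _ = ∑ x ∈ Λ'', ∑' l : ↥Λᶜ, g l x := by
        rw [← _root_.tsum_subtype, Summable.tsum_finsetSum fun _ _ => ENNReal.summable]
    _ ≤ ∑ _x ∈ Λ'', ENNReal.ofReal (intrusionBound d C c q B R) :=
        sum_le_sum fun x hx => tsum_ofReal_weight_mul_decay_sq_le hc hq hB (hB'' x hx)
          fun l hl => hsep x hx l hl
    _ = _ := by rw [sum_const, nsmul_eq_mul]

lemma encard_statesCenteredIn_cube_mul_le (hc : 0 < c) (hq : 0 ≤ q) (hC : 0 ≤ C)
    (hrow : ∀ s, ∑' x, ψ s x ^ 2 = 1) (hcol : ∀ x, ∑' s, ψ s x ^ 2 = 1)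
    (hloc : IsSemiUniformlyLocalized ψ C c q)
    (k : Fin d → ℤ) (L R : ℕ) {B : ℝ} (hB : ‖k‖ + L ≤ B) :
    (statesCenteredIn ψ (cube k 0 L)).encard * ENNReal.ofReal (1 - leakageBound d C c q B R) ≤
      ((L + 2 * R) ^ d : ℕ) := by
  have hcard : #(cube k (-R) (L + R)) = (L + 2 * R) ^ d := by
    rw [card_cube]; congr 1; omega
  rw [← hcard]
  refine encard_mul_le_card_of_le_sum
    (fun x => (ENNReal.tsum_ofReal_eq_one (fun _ => sq_nonneg _) (hcol x)).le) ?_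
  rintro s ⟨l, hl, hlΛ⟩
  have hlB : ‖l‖ ≤ B := (norm_le_of_mem_cube le_rfl (by positivity) hlΛ).trans hB
  refine ofReal_one_sub_le_sum_of_decay (l := l) hc (hrow s)
    (fun x => (hloc s l hl x).trans ?_) ?_
  · gcongr
  · intro x hx
    rw [norm_sub_rev]
    exact le_norm_sub_of_mem_cube_of_notMem R (by simpa using hlΛ) hx

lemma card_le_encard_statesCenteredIn_cube_add (hc : 0 < c) (hq : 0 ≤ q)
    (hrow : ∀ s, ∑' x, ψ s x ^ 2 = 1) (hcol : ∀ x, ∑' s, ψ s x ^ 2 = 1)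
    (hcen : ∀ s, ∃ l, IsLocalizationCenter (ψ s) l)
    (hloc : IsSemiUniformlyLocalized ψ C c q)
    (k : Fin d → ℤ) {L R : ℕ} (h2R : 2 * R ≤ L) {B : ℝ} (hB : ‖k‖ + L ≤ B) :
    (((L - 2 * R) ^ d : ℕ) : ℝ≥0∞) ≤ (statesCenteredIn ψ (cube k 0 L)).encard +
      ((L - 2 * R) ^ d : ℕ) * ENNReal.ofReal (intrusionBound d C c q B R) := by
  have hcard : #(cube k R (L - R)) = (L - 2 * R) ^ d := by
    rw [card_cube]; congr 1; omega
  rw [← hcard]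
  refine (card_le_encard_add_tsum_compl
    (fun s => (ENNReal.tsum_ofReal_eq_one (fun _ => sq_nonneg _) (hrow s)).le)
    (fun x => ENNReal.tsum_ofReal_eq_one (fun _ => sq_nonneg _) (hcol x))
    (statesCenteredIn ψ (cube k 0 L)) _).trans ?_
  gcongr
  refine tsum_compl_statesCenteredIn_sum_le hc hq ((norm_nonneg k).trans (by linarith))
    hrow hcol hcen hloc
    (fun x hx => (norm_le_of_mem_cube (by positivity) (by omega) hx).trans ?_) ?_
  · have : ((L - R : ℤ) : ℝ) ≤ L := by push_cast; linarith [(Nat.cast_nonneg R : (0:ℝ) ≤ R)]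
    linarith
  · intro x hx l hl
    exact le_norm_sub_of_mem_cube_of_notMem (a := 0) R (by rwa [zero_add]) hl

lemma ncard_statesCenteredIn_cube_bounds {ε : ℝ} (hc : 0 < c) (hq : 0 ≤ q) (hC : 0 ≤ C)
    (hε0 : 0 < ε) (hε1 : ε < 1)
    (hrow : ∀ s, ∑' x, ψ s x ^ 2 = 1) (hcol : ∀ x, ∑' s, ψ s x ^ 2 = 1)
    (hcen : ∀ s, ∃ l, IsLocalizationCenter (ψ s) l)
    (hloc : IsSemiUniformlyLocalized ψ C c q)
    (k : Fin d → ℤ) (L : ℕ) {B : ℝ} (hB : ‖k‖ + L ≤ B)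
    (hη : leakageBound d C c q B ⌊ε * L / 4⌋₊ ≤ 1 - ((1 + ε / 2) / (1 + ε)) ^ d)
    (hδ : intrusionBound d C c q B ⌊ε * L / 4⌋₊ ≤ 1 - ((1 - ε) / (1 - ε / 2)) ^ d) :
    (1 - ε) ^ d * (L : ℝ) ^ d ≤ (statesCenteredIn ψ (cube k 0 L)).ncard ∧
      ((statesCenteredIn ψ (cube k 0 L)).ncard : ℝ) ≤ (1 + ε) ^ d * (L : ℝ) ^ d := by
  -- `R = ⌊εL/4⌋` keeps the sides `L ± 2R` of the enlarged and shrunk cubes within `(1 ± ε/2) L`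
  set R := ⌊ε * L / 4⌋₊
  have hR : (R : ℝ) ≤ ε * L / 4 := Nat.floor_le (by positivity)
  have h2R : 2 * R ≤ L := by exact_mod_cast (show (2 * R : ℝ) ≤ L by nlinarith)
  have hB0 : 0 ≤ B := by linarith [norm_nonneg k, L.cast_nonneg (α := ℝ)]
  obtain ⟨hU, hLo⟩ := ncard_mul_le_and_le_ncard
    (hη.trans_lt (sub_lt_self 1 (by positivity)))
    (by have := expSum_nonneg d c; unfold intrusionBound; positivity)
    (encard_statesCenteredIn_cube_mul_le hc hq hC hrow hcol hloc k L R hB)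
    (card_le_encard_statesCenteredIn_cube_add hc hq hrow hcol hcen hloc k h2R hB)
  push_cast [Nat.cast_sub h2R] at hU hLo
  exact ⟨pow_mul_le_of_le_mul_one_sub (by linarith) (by linarith) L.cast_nonneg (by nlinarith)
      hδ hLo,
    le_pow_mul_of_mul_one_sub_le (by linarith) (by linarith) (Nat.cast_nonneg _) (by positivity)
      (by nlinarith) hη hU⟩
end Family

/-- Equidistribution of localization centers: for a complete orthonormal family
`{ψ_s}` with the semi-uniform localization bound
`|ψ_s(x)| ≤ C(1+|l|)^q e^{−c|x−l|}` at each localization center `l`, there is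
`L_ε` (depending only on `ε, C, c, q, d`) such that for `L ≥ L_ε` and
`k ∈ [−L⁴, L⁴]^d` the number of `s` whose localization center lies in the cube
`(k₁, k₁+L] × ⋯ × (k_d, k_d+L]` is between `(1−ε)^d L^d` and `(1+ε)^d L^d`. -/
theorem stmt16 (d : ℕ) (hd : 1 ≤ d) (ε C c q : ℝ)
    (hε0 : 0 < ε) (hε1 : ε < 1) (hC : 0 < C) (hc : 0 < c) (hq : 0 < q) :
    ∃ Lε : ℕ, ∀ ψ : (Fin d → ℤ) → (Fin d → ℤ) → ℝ,
      (∀ s : Fin d → ℤ, ∑' x : Fin d → ℤ, ψ s x ^ 2 = 1) →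
      (∀ x : Fin d → ℤ, ∑' s : Fin d → ℤ, ψ s x ^ 2 = 1) →
      (∀ s : Fin d → ℤ, ∃ l : Fin d → ℤ, ∀ x, |ψ s x| ≤ |ψ s l|) →
      (∀ s l : Fin d → ℤ, (∀ x, |ψ s x| ≤ |ψ s l|) →
        ∀ x : Fin d → ℤ,
          |ψ s x| ≤ C * (1 + supNormZ l) ^ q * Real.exp (-c * supNormZ (x - l))) →
      ∀ L : ℕ, Lε ≤ L → ∀ k : Fin d → ℤ, (∀ i, |k i| ≤ (L : ℤ) ^ 4) →
        (1 - ε) ^ d * (L : ℝ) ^ d ≤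
            (Set.ncard {s : Fin d → ℤ | ∃ l : Fin d → ℤ,
              (∀ x, |ψ s x| ≤ |ψ s l|) ∧ ∀ i, k i < l i ∧ l i ≤ k i + L} : ℝ) ∧
          (Set.ncard {s : Fin d → ℤ | ∃ l : Fin d → ℤ,
              (∀ x, |ψ s x| ≤ |ψ s l|) ∧ ∀ i, k i < l i ∧ l i ≤ k i + L} : ℝ) ≤
            (1 + ε) ^ d * (L : ℝ) ^ d := by
  have hd0 : d ≠ 0 := by omega
  obtain ⟨Lε, hLε⟩ := eventually_atTop.mp <|
    eventually_leakageBound_le_and_intrusionBound_le (d := d) (C := C) hc hq.le hε0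
    (one_sub_div_pow_pos (by linarith) (by linarith : 1 + ε / 2 < 1 + ε) hd0)
    (one_sub_div_pow_pos (by linarith) (by linarith : 1 - ε < 1 - ε / 2) hd0)
  refine ⟨Lε, fun ψ hrow hcol hcen hloc L hL k hk => ?_⟩
  have hB : ‖k‖ + L ≤ (L : ℝ) ^ 4 + L := by
    gcongr
    refine pi_norm_le_iff_of_nonneg (by positivity) |>.mpr fun i => ?_
    rw [Int.norm_eq_abs]; exact_mod_cast hk i
  have hS : {s | ∃ l, (∀ x, |ψ s x| ≤ |ψ s l|) ∧ ∀ i, k i < l i ∧ l i ≤ k i + L} =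
      statesCenteredIn ψ (cube k 0 L) := by
    ext s; simp [statesCenteredIn, IsLocalizationCenter, mem_cube]
  rw [hS]
  exact ncard_statesCenteredIn_cube_bounds hc hq.le hC.le hε0 hε1 hrow hcol hcen
    (by simp only [supNormZ_eq_norm] at hloc; exact hloc) k L hB (hLε L hL).1 (hLε L hL).2
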